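/- Let v₀, …, v_n be positive reals, u₁, …, u_n ∈ [0,1], and define the backward Metropolis runs A₀, …, A_n from them. If 0 ≤ k < n and v_k ≤ max{v_{k+1}, …, v_n}, then A_k = A_{k+1}; that is, a backward run started at a weight that does not strictly exceed all later proposed weights couples with the run started one step later. -/

import Mathlib

/-!
Run the chain from `k` one step ahead and compare it with the chain from `k + 1`: at every time
both see the same proposal `w` and the same draw `u`. For a current weight `x > 0` and `u ≤ 1`
the proposal is accepted iff `u * x ≤ w`, a test that is easier to pass from a smaller weight.
Hence the two chains have either merged or the first one is still stuck at `v k`, strictly above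
the second. The first proposal of weight at least `v k` is accepted by both, so they merge.
-/

open MeasureTheory

/-- The Metropolis weight update: from current weight `w`, proposed weight `w'`, and
uniform draw `u`, accept the proposal iff `u ≤ min 1 (w'/w)`. -/
noncomputable def metroF (w w' u : ℝ) : ℝ := if u ≤ min 1 (w' / w) then w' else w

/-- The chain started at index `k`, after `m` steps: `B k = v k`,
`B (k+m+1) = f (B (k+m)) (v (k+m+1)) (u (k+m+1))`. -/
noncomputable def backB (v u : ℕ → ℝ) (k : ℕ) : ℕ → ℝ
  | 0 => v k
  | m + 1 => metroF (backB v u k m) (v (k + m + 1)) (u (k + m + 1))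

/-- The backward Metropolis run started at index `k ≤ n`: start at `v k` and apply the
Metropolis updates with proposals `v (k+1), …, v n` and draws `u (k+1), …, u n`; runs
started at different indices share the same pair `(v j, u j)` at each step `j`. -/
noncomputable def backA (v u : ℕ → ℝ) (n k : ℕ) : ℝ := backB v u k (n - k)

section metroF

variable {c w w' y u : ℝ}

lemma metroF_eq_ite (hw : 0 < w) (hu : u ≤ 1) :
    metroF w w' u = if u * w ≤ w' then w' else w := by
  simp only [metroF, le_min_iff, hu, true_and, le_div_iff₀ hw]

lemma metroF_of_le (hw : 0 < w) (hww' : w ≤ w') (hu : u ≤ 1) : metroF w w' u = w' := by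
  rw [metroF_eq_ite hw hu, if_pos (by nlinarith)]

lemma metroF_eq_or_lt (hc : 0 < c) (hu : u ≤ 1) :
    metroF c w u = w ∨ (metroF c w u = c ∧ w < c) := by
  rw [metroF_eq_ite hc hu]
  split_ifs with hacc
  · exact .inl rfl
  · exact .inr ⟨rfl, by nlinarith⟩

lemma metroF_eq_or_lt_of_lt (hy : 0 < y) (hyc : y < c) (hu : u ∈ Set.Icc (0 : ℝ) 1) :
    metroF c w u = metroF y w u ∨ (metroF c w u = c ∧ metroF y w u < c) := by
  have hc : 0 < c := hy.trans hyc
  rw [metroF_eq_ite hc hu.2, metroF_eq_ite hy hu.2]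
  by_cases hacc : u * c ≤ w
  · have hacc' : u * y ≤ w := (mul_le_mul_of_nonneg_left hyc.le hu.1).trans hacc
    simp only [hacc, hacc', if_true, true_or]
  · have hwc : w < c := by nlinarith [hu.2]
    refine .inr ⟨if_neg hacc, ?_⟩
    split_ifs <;> assumption

end metroF

section backB

variable {v u : ℕ → ℝ} (hv : ∀ i, 0 < v i) (hu : ∀ i, u i ∈ Set.Icc (0 : ℝ) 1)
include hv

lemma backB_pos (k m : ℕ) : 0 < backB v u k m := by
  induction m with
  | zero => exact hv k
  | succ m ih =>
    rw [backB, metroF]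
    split_ifs
    exacts [hv _, ih]

omit hv in
lemma backB_add_two (k m : ℕ) :
    backB v u k (m + 2) = metroF (backB v u k (m + 1)) (v (k + 1 + m + 1)) (u (k + 1 + m + 1)) := by
  rw [backB, Nat.add_right_comm k 1 m, Nat.add_assoc k m 1]

include hu

lemma backB_succ_eq_or (k m : ℕ) :
    backB v u k (m + 1) = backB v u (k + 1) m ∨
      (backB v u k (m + 1) = v k ∧ backB v u (k + 1) m < v k) := by
  induction m with
  | zero => exact metroF_eq_or_lt (hv k) (hu _).2
  | succ m ih =>
    rw [backB_add_two, backB.eq_2 v u (k + 1)]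
    rcases ih with hmerged | ⟨hstuck, hbelow⟩
    · exact .inl (by rw [hmerged])
    · rw [hstuck]
      exact metroF_eq_or_lt_of_lt (backB_pos hv _ _) hbelow (hu _)

lemma backB_succ_eq_of_le (k m j : ℕ) (hkj : k < j) (hjm : j ≤ k + 1 + m) (hvj : v k ≤ v j) :
    backB v u k (m + 1) = backB v u (k + 1) m := by
  induction m with
  | zero =>
    obtain rfl : j = k + 1 := by omega
    exact metroF_of_le (hv k) hvj (hu _).2
  | succ m ih =>
    rw [backB_add_two, backB.eq_2 v u (k + 1)]
    rcases Nat.lt_or_ge (k + 1 + m) j with hjlast | hjearly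
    · obtain rfl : j = k + 1 + m + 1 := by omega
      rcases backB_succ_eq_or hv hu k m with hmerged | ⟨hstuck, hbelow⟩
      · rw [hmerged]
      · rw [hstuck, metroF_of_le (hv k) hvj (hu _).2,
          metroF_of_le (backB_pos hv _ _) (hbelow.le.trans hvj) (hu _).2]
    · rw [ih hjearly]

end backB

/-- **Backward runs couple below a later maximum.** If `0 ≤ k < n` and
`v k ≤ max {v (k+1), …, v n}`, then the backward runs started at `k` and at `k+1`
agree: `A k = A (k+1)`. -/
theorem backward_coupling_of_le_max
    (n : ℕ) (v u : ℕ → ℝ) (hv : ∀ i, 0 < v i)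
    (hu : ∀ i, u i ∈ Set.Icc (0 : ℝ) 1) (k : ℕ) (hkn : k < n)
    (hmax : v k ≤ (Finset.Icc (k + 1) n).sup' (Finset.nonempty_Icc.mpr hkn) v) :
    backA v u n k = backA v u n (k + 1) := by
  obtain ⟨j, hj, hvj⟩ := (Finset.le_sup'_iff _).mp hmax
  rw [Finset.mem_Icc] at hj
  have hnk : n - k = n - (k + 1) + 1 := by omega
  rw [backA, backA, hnk]
  exact backB_succ_eq_of_le hv hu k _ j (by omega) (by omega) hvj
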